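/- arXiv:2406.00965 — 2 statements merged into one kernel-verified Lean document; each statement's English description precedes it below -/
import Mathlib

section
/- With h^α as defined, for any α ≥ 1, any paths p*, p, and heuristic path p̂ such that (i) D(p*) ≤ D(p), and (ii) I(p,a) ≤ I(p̂,a) and I(p̂,a) ≤ I(p*,a) for all actions a in the support of p̂ (i.e., all a with I(p̂,a) > 0), it holds that h^α(p*,p̂) ≤ h^α(p,p̂). -/
open Finset

variable {A : Type*} [Fintype A] [DecidableEq A]

noncomputable def pathCost (D : A → ℝ) (p : Multiset A) : ℝ :=
  ∑ a : A, (p.count a : ℝ) * D a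

noncomputable def hAlpha (α : ℝ) (D : A → ℝ) (p q : Multiset A) : ℝ :=
  (∑ a : A, max 0 ((p.count a : ℝ) - (q.count a : ℝ)) * D a)
    + (1 / α) * ∑ a : A, max 0 ((q.count a : ℝ) - (p.count a : ℝ)) * D a

noncomputable def hInf (D : A → ℝ) (p q : Multiset A) : ℝ :=
  ∑ a : A, max 0 ((p.count a : ℝ) - (q.count a : ℝ)) * D a

theorem stmt_1 (D : A → ℝ) (hD : ∀ a, 0 ≤ D a) (α : ℝ) (hα : 1 ≤ α)
    (pstar p phat : Multiset A)
    (hopt : pathCost D pstar ≤ pathCost D p)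
    (hhat : ∀ a, phat.count a ≤ pstar.count a)
    (hsupp : ∀ a ∈ phat, p.count a ≤ phat.count a ∧ phat.count a ≤ pstar.count a) :
    hAlpha α D pstar phat ≤ hAlpha α D p phat := by
  have hαpos : (0:ℝ) < α := lt_of_lt_of_le one_pos hα
  have h1 : hAlpha α D pstar phat = pathCost D pstar - pathCost D phat := by
    unfold hAlpha pathCost
    have e2 : ∑ a : A, max 0 ((phat.count a : ℝ) - (pstar.count a : ℝ)) * D a = 0 := by
      apply Finset.sum_eq_zero; intro a _
      have h := (Nat.cast_le (α := ℝ)).mpr (hhat a)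
      rw [max_eq_left (by linarith), zero_mul]
    rw [e2, mul_zero, add_zero, ← Finset.sum_sub_distrib]
    apply Finset.sum_congr rfl; intro a _
    have h := (Nat.cast_le (α := ℝ)).mpr (hhat a)
    rw [max_eq_right (by linarith)]; ring
  have h2 : pathCost D p - pathCost D phat ≤ hAlpha α D p phat := by
    unfold hAlpha pathCost
    have hb : (∑ a : A, (p.count a : ℝ) * D a) - ∑ a : A, (phat.count a : ℝ) * D a
        ≤ ∑ a : A, max 0 ((p.count a : ℝ) - (phat.count a : ℝ)) * D a := by
      rw [← Finset.sum_sub_distrib]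
      apply Finset.sum_le_sum; intro a _
      have h := mul_le_mul_of_nonneg_right
        (le_max_right (0:ℝ) ((p.count a : ℝ) - (phat.count a : ℝ))) (hD a)
      nlinarith
    have hc : 0 ≤ (1/α) * ∑ a : A, max 0 ((phat.count a : ℝ) - (p.count a : ℝ)) * D a := by
      apply mul_nonneg (by positivity)
      exact Finset.sum_nonneg fun a _ => mul_nonneg (le_max_left _ _) (hD a)
    linarith
  linarith
end

section
/- Regression through a sequence of actions is sound: given actions a₁, …, aₙ applied in order to state s₀ producing states sᵢ = (s_{i−1} ∪ add(aᵢ)) \ del(aᵢ), and a goal condition g, define regressed conditions backward by cₙ = g and c_{i−1} = pre(aᵢ) ∪ (cᵢ \ add(aᵢ)). If for every i the condition cᵢ is disjoint from del(aᵢ) (i.e., cᵢ ∩ del(aᵢ) = ∅) and c₀ ⊆ s₀, then g ⊆ sₙ, i.e., executing the action sequence from s₀ achieves the goal. -/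
structure StripsAction (L : Type*) where
  pre : Set L
  add : Set L
  del : Set L

def StripsAction.succ {L : Type*} (a : StripsAction L) (s : Set L) : Set L :=
  (s ∪ a.add) \ a.del

def StripsAction.regress {L : Type*} (a : StripsAction L) (c : Set L) : Set L :=
  a.pre ∪ (c \ a.add)

def execList {L : Type*} (s : Set L) : List (StripsAction L) → Set L
  | [] => s
  | a :: rest => execList (a.succ s) rest

def regressList {L : Type*} (g : Set L) : List (StripsAction L) → Set L
  | [] => g
  | a :: rest => a.regress (regressList g rest)

def regressOK {L : Type*} (g : Set L) : List (StripsAction L) → Prop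
  | [] => True
  | a :: rest => regressList g rest ∩ a.del = ∅ ∧ regressOK g rest

theorem stmt_14 {L : Type*} (as : List (StripsAction L)) (s₀ g : Set L)
    (hok : regressOK g as) (hinit : regressList g as ⊆ s₀) :
    g ⊆ execList s₀ as := by
  induction as generalizing s₀ with
  | nil => exact hinit
  | cons a rest ih =>
    obtain ⟨hd, hok⟩ := hok
    apply ih _ hok
    intro x hx
    have hnd : x ∉ a.del := fun h =>
      Set.eq_empty_iff_forall_notMem.mp hd x ⟨hx, h⟩
    refine ⟨?_, hnd⟩
    by_cases hxadd : x ∈ a.add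
    · exact Or.inr hxadd
    · exact Or.inl (hinit (Or.inr ⟨hx, hxadd⟩))
end
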